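/- arXiv:1005.1369 — 6 statements merged into one kernel-verified Lean document; each statement's English description precedes it below -/
import Mathlib

section
/- Let G_1, …, G_r be confusion graphs on the alphabet Σ_k and let G = ∩_{i=1}^r G_i be the graph on Σ_k in which two letters are adjacent exactly when they are adjacent in G_i for every i. Then every feasible rate vector (R_1, …, R_r) satisfies Σ_{i=1}^{r} R_i ≤ log₂ c(G). -/
/-- Two strings of length `n` over the alphabet are distinguishable for a user with
confusion graph `G` if they differ at some coordinate at two non-adjacent letters. -/
def Distinguishable {V : Type*} (G : SimpleGraph V) {n : ℕ} (x y : Fin n → V) : Prop :=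
  ∃ t : Fin n, x t ≠ y t ∧ ¬ G.Adj (x t) (y t)

/-- `alphaN G n` is the largest size of a family of strings in `V^n` that are pairwise
distinguishable (the independence number of the `n`-fold strong product of `G`). -/
noncomputable def alphaN {V : Type*} [Fintype V] (G : SimpleGraph V) (n : ℕ) : ℕ :=
  sSup {N : ℕ | ∃ S : Finset (Fin n → V), S.card = N ∧
    ∀ x ∈ S, ∀ y ∈ S, x ≠ y → Distinguishable G x y}

/-- The Shannon capacity of a confusion graph: `c(G) = sup_{n ≥ 1} α_n(G)^{1/n}`. -/
noncomputable def shannonCapacity {V : Type*} [Fintype V] (G : SimpleGraph V) : ℝ :=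
  ⨆ n : ℕ, (alphaN G (n + 1) : ℝ) ^ (((n : ℝ) + 1))⁻¹

/-- `(m 1, …, m r)` is feasible at length `n` for the confusion graphs `G i` if there is an
encoding map `E` such that any two message tuples differing in the `i`-th component get codewords
that are distinguishable for user `i` (so user `i` can decode his own message). -/
def FeasibleAtLength {k r : ℕ} (G : Fin r → SimpleGraph (Fin k)) (m : Fin r → ℕ) (n : ℕ) :
    Prop :=
  ∃ E : (∀ i : Fin r, Fin (m i)) → (Fin n → Fin k),
    ∀ i : Fin r, ∀ a b : (∀ i : Fin r, Fin (m i)), a i ≠ b i →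
      ∃ t : Fin n, E a t ≠ E b t ∧ ¬ (G i).Adj (E a t) (E b t)

/-- A rate vector `R` of nonnegative reals is feasible if there are positive integers `m n i`
with `(m n 1, …, m n r)` feasible at length `n` for every `n` and `log₂ (m n i) / n → R i`. -/
def FeasibleRate {k r : ℕ} (G : Fin r → SimpleGraph (Fin k)) (R : Fin r → ℝ) : Prop :=
  (∀ i, 0 ≤ R i) ∧
  ∃ m : ℕ → Fin r → ℕ,
    (∀ n i, 0 < m n i) ∧
    (∀ n : ℕ, FeasibleAtLength G (m n) n) ∧
    ∀ i, Filter.Tendsto (fun n : ℕ => Real.logb 2 (m n i) / n) Filter.atTop (nhds (R i))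

/-!
An encoding feasible at length `n` is injective, and any two of its codewords are
distinguishable for the intersection graph `⋂ i, G i`, because they are already distinguishable
for some user. Its image therefore witnesses `∏ i, m i ≤ α_n(⋂ i, G i) ≤ c(⋂ i, G i) ^ n`, i.e.
`∑ i, log₂ (m i) / n ≤ log₂ c(⋂ i, G i)` for every `n ≥ 1`, and the bound passes to the limit.
-/

open Real

section Distinguishable

variable {V : Type*} {n : ℕ} {x y : Fin n → V}

theorem Distinguishable.ne {G : SimpleGraph V} (h : Distinguishable G x y) : x ≠ y := by
  obtain ⟨t, hne, -⟩ := h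
  exact fun hxy => hne (congrFun hxy t)

theorem Distinguishable.anti {G H : SimpleGraph V} (hHG : H ≤ G) (h : Distinguishable G x y) :
    Distinguishable H x y := by
  obtain ⟨t, hne, hadj⟩ := h
  exact ⟨t, hne, fun h' => hadj (hHG h')⟩

end Distinguishable

section alphaN

variable {V : Type*} [Fintype V] (G : SimpleGraph V)

theorem card_pow_mem_upperBounds_alphaN_set (n : ℕ) :
    Fintype.card V ^ n ∈ upperBounds {N : ℕ | ∃ S : Finset (Fin n → V), S.card = N ∧
      ∀ x ∈ S, ∀ y ∈ S, x ≠ y → Distinguishable G x y} := by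
  rintro N ⟨S, rfl, -⟩
  simpa using S.card_le_univ

theorem alphaN_le_card_pow (n : ℕ) : alphaN G n ≤ Fintype.card V ^ n :=
  csSup_le ⟨0, ∅, rfl, by simp⟩ (card_pow_mem_upperBounds_alphaN_set G n)

theorem card_le_alphaN {G} {n : ℕ} {S : Finset (Fin n → V)}
    (hS : ∀ x ∈ S, ∀ y ∈ S, x ≠ y → Distinguishable G x y) : S.card ≤ alphaN G n :=
  le_csSup ⟨_, card_pow_mem_upperBounds_alphaN_set G n⟩ ⟨S, rfl, hS⟩

theorem bddAbove_range_alphaN_rpow :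
    BddAbove (Set.range fun n : ℕ => (alphaN G (n + 1) : ℝ) ^ ((n : ℝ) + 1)⁻¹) := by
  refine ⟨Fintype.card V, ?_⟩
  rintro _ ⟨n, rfl⟩
  have hα : (alphaN G (n + 1) : ℝ) ≤ (Fintype.card V : ℝ) ^ (n + 1) := by
    exact_mod_cast alphaN_le_card_pow G (n + 1)
  calc (alphaN G (n + 1) : ℝ) ^ ((n : ℝ) + 1)⁻¹
      ≤ ((Fintype.card V : ℝ) ^ (n + 1)) ^ (((n + 1 : ℕ) : ℝ))⁻¹ := by
        push_cast
        gcongr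
    _ = Fintype.card V := pow_rpow_inv_natCast (by positivity) n.succ_ne_zero

theorem alphaN_rpow_inv_le_shannonCapacity {n : ℕ} (hn : n ≠ 0) :
    (alphaN G n : ℝ) ^ (n : ℝ)⁻¹ ≤ shannonCapacity G := by
  obtain ⟨n, rfl⟩ := Nat.exists_eq_succ_of_ne_zero hn
  simpa [shannonCapacity] using le_ciSup (bddAbove_range_alphaN_rpow G) n

theorem logb_alphaN_div_le_logb_shannonCapacity {b : ℝ} (hb : 1 < b) {n : ℕ}
    (hα : 0 < alphaN G n) (hn : n ≠ 0) :
    logb b (alphaN G n) / n ≤ logb b (shannonCapacity G) := by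
  have hα' : (0 : ℝ) < alphaN G n := by exact_mod_cast hα
  calc logb b (alphaN G n) / n = logb b ((alphaN G n : ℝ) ^ (n : ℝ)⁻¹) := by
        rw [logb_rpow_eq_mul_logb_of_pos hα', inv_mul_eq_div]
    _ ≤ logb b (shannonCapacity G) :=
        logb_le_logb_of_le hb (by positivity) (alphaN_rpow_inv_le_shannonCapacity G hn)

end alphaN

namespace FeasibleAtLength

variable {k r n : ℕ} {G : Fin r → SimpleGraph (Fin k)} {m : Fin r → ℕ}

theorem prod_le_alphaN_iInf (h : FeasibleAtLength G m n) : ∏ i, m i ≤ alphaN (⨅ i, G i) n := by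
  obtain ⟨E, hE⟩ := h
  have hdist : ∀ a b, a ≠ b → Distinguishable (⨅ i, G i) (E a) (E b) := fun a b hab =>
    let ⟨i, hi⟩ := Function.ne_iff.mp hab
    Distinguishable.anti (iInf_le G i) (hE i a b hi)
  have hinj : Function.Injective E := fun a b hab =>
    by_contra fun hne => (hdist a b hne).ne hab
  calc ∏ i, m i = (Finset.univ.image E).card := by
        simp [Finset.card_image_of_injective _ hinj]
    _ ≤ alphaN (⨅ i, G i) n := card_le_alphaN <| by
        simp only [Finset.mem_image, Finset.mem_univ, true_and]
        rintro _ ⟨a, rfl⟩ _ ⟨b, rfl⟩ hab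
        exact hdist a b fun h => hab (congrArg E h)

theorem sum_logb_div_le_logb_shannonCapacity_iInf {b : ℝ} (hb : 1 < b)
    (h : FeasibleAtLength G m n) (hm : ∀ i, 0 < m i) (hn : n ≠ 0) :
    ∑ i, logb b (m i) / n ≤ logb b (shannonCapacity (⨅ i, G i)) := by
  have hprod := h.prod_le_alphaN_iInf
  have hprod_pos : 0 < ∏ i, m i := Finset.prod_pos fun i _ => hm i
  calc ∑ i, logb b (m i) / n = logb b (∏ i, m i : ℕ) / n := by
        rw [← Finset.sum_div, Nat.cast_prod,
          logb_prod _ _ fun i _ => Nat.cast_ne_zero.mpr (hm i).ne']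
    _ ≤ logb b (alphaN (⨅ i, G i) n) / n := by gcongr
    _ ≤ logb b (shannonCapacity (⨅ i, G i)) :=
        logb_alphaN_div_le_logb_shannonCapacity _ hb (hprod_pos.trans_le hprod) hn

end FeasibleAtLength

theorem sum_rate_le_logb_shannonCapacity_iInf_general {k r : ℕ}
    (G : Fin r → SimpleGraph (Fin k)) (R : Fin r → ℝ) (hR : FeasibleRate G R) :
    ∑ i : Fin r, R i ≤ Real.logb 2 (shannonCapacity (⨅ i : Fin r, G i)) := by
  obtain ⟨-, m, hm, hfeas, hlim⟩ := hR
  refine le_of_tendsto (tendsto_finsetSum _ fun i _ => hlim i) ?_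
  filter_upwards [Filter.eventually_ne_atTop 0] with n hn
  exact (hfeas n).sum_logb_div_le_logb_shannonCapacity_iInf one_lt_two (hm n) hn

/-- Every feasible rate vector satisfies `∑ i, R i ≤ log₂ c(⋂ i, G i)`, where the intersection
graph joins two letters exactly when they are adjacent in `G i` for every `i`. -/
theorem sum_rate_le_logb_shannonCapacity_iInf {k r : ℕ} (hk : 2 ≤ k)
    (G : Fin r → SimpleGraph (Fin k)) (R : Fin r → ℝ) (hR : FeasibleRate G R) :
    ∑ i : Fin r, R i ≤ Real.logb 2 (shannonCapacity (⨅ i : Fin r, G i)) :=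
  sum_rate_le_logb_shannonCapacity_iInf_general G R hR
end

section
/- Let 2 ≤ d ≤ k, let G_1 be the complete graph on Σ_k minus a clique on Σ_d, and let G_2 be the empty graph on Σ_k (user 2 distinguishes all letters). Then for every α ∈ [0,1] the rate vector (α·log₂ d, (1−α)·log₂ k) is optimal; in particular it is feasible, and every feasible rate vector (R_1, R_2) with R_1 ≥ α·log₂ d satisfies R_2 ≤ (1−α)·log₂ k. -/
/-- A feasible rate vector for two users is optimal if no user can increase his rate while
the other maintains the same rate. -/
def OptimalRate {k : ℕ} (G : Fin 2 → SimpleGraph (Fin k)) (R : Fin 2 → ℝ) : Prop :=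
  FeasibleRate G R ∧
  (¬ ∃ R1' : ℝ, R 0 < R1' ∧ FeasibleRate G ![R1', R 1]) ∧
  (¬ ∃ R2' : ℝ, R 1 < R2' ∧ FeasibleRate G ![R 0, R2'])

/-!
Time sharing achieves the rates: spend a fraction `α` of the positions on letters of `Σ_d`
carrying the message of user 1, and the remaining positions on arbitrary letters carrying the
message of user 2.

For the converse, the cube of a word `x ∈ Σ_k^n` is the set of words of `Σ_d^n` that agree with
`x` wherever `x` has a letter of `Σ_d`. Codewords of different messages of user 1 must differ at a
position where both carry letters of `Σ_d`, so the unions `V_i` of the cubes of the codewords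
carrying message `i` of user 1 are pairwise disjoint, and each contains the cubes of `m₂` distinct
words. An induction on `n` driven by the convexity of `t ↦ t ^ log_d k` shows that at most
`|V| ^ log_d k` words have their cube inside a set `V ⊆ Σ_d^n`. Hence `m₁ · m₂ ^ log_k d ≤ d ^ n`,
that is `log_d m₁ + log_k m₂ ≤ n`, and in the limit `R₁ / log₂ d + R₂ / log₂ k ≤ 1`.
-/

open Finset Real

theorem ConvexOn.map_add_sub_map_le {s : Set ℝ} {f : ℝ → ℝ} (hf : ConvexOn ℝ s f) {a b x : ℝ}
    (hb : b ∈ s) (hax : a + x ∈ s) (hba : b ≤ a) (hx : 0 ≤ x) :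
    f (b + x) - f b ≤ f (a + x) - f a := by
  rcases (show b ≤ a + x by linarith).eq_or_lt with h | h
  · obtain rfl : a = b := by linarith
    obtain rfl : x = 0 := by linarith
    rfl
  set lam := x / (a + x - b)
  have hlam0 : 0 ≤ lam := div_nonneg hx (by linarith)
  have hlam1 : lam ≤ 1 := (div_le_one (by linarith)).2 (by linarith)
  have hmul : lam * (a + x - b) = x := div_mul_cancel₀ x (by linarith)
  have ha := hf.2 hb hax hlam0 (sub_nonneg.2 hlam1) (add_sub_cancel lam 1)
  have hbx := hf.2 hb hax (sub_nonneg.2 hlam1) hlam0 (sub_add_cancel 1 lam)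
  simp only [smul_eq_mul] at ha hbx
  rw [show lam * b + (1 - lam) * (a + x) = a by linear_combination -hmul] at ha
  rw [show (1 - lam) * b + lam * (a + x) = b + x by linear_combination hmul] at hbx
  linarith

theorem ConvexOn.sum_map_add_map_card_mul_le {ι : Type*} {f : ℝ → ℝ}
    (hf : ConvexOn ℝ (Set.Ici 0) f) (s : Finset ι) {v : ι → ℝ} {t : ℝ} (ht : 0 ≤ t)
    (hv : ∀ j ∈ s, t ≤ v j) :
    ∑ j ∈ s, f (v j) + f (#s * t) ≤ f (∑ j ∈ s, v j) + #s * f t := by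
  classical
  induction s using Finset.induction_on with
  | empty => simp
  | insert a s ha ih =>
    rw [forall_mem_insert] at hv
    have hA : #s * t ≤ ∑ j ∈ s, v j := by simpa using card_nsmul_le_sum s v t hv.2
    have hSt : (0 : ℝ) ≤ #s * t := by positivity
    have step_a := hf.map_add_sub_map_le (x := v a) hSt
      (show ∑ j ∈ s, v j + v a ∈ Set.Ici 0 by simp only [Set.mem_Ici]; linarith [hv.1]) hA
      (ht.trans hv.1)
    have step_s := hf.map_add_sub_map_le (x := #s * t) ht
      (show v a + #s * t ∈ Set.Ici 0 by simp only [Set.mem_Ici]; linarith [hv.1]) hv.1 hSt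
    rw [sum_insert ha, sum_insert ha, card_insert_of_notMem ha, Nat.cast_succ,
      show ((#s : ℝ) + 1) * t = t + #s * t by ring]
    rw [add_comm (#s * t) (v a), add_comm (∑ j ∈ s, v j) (v a)] at step_a
    linarith [ih hv.2]

theorem card_filter_piFinSucc {α : Type*} [Fintype α] {n : ℕ} (P : (Fin (n + 1) → α) → Prop)
    [DecidablePred P] :
    #{x | P x} = ∑ a, #{y : Fin n → α | P (Fin.cons a y)} := by
  simp only [card_filter]
  rw [← (Fin.consEquiv fun _ => α).sum_comp, Fintype.sum_prod_type]
  rfl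

theorem Fin.sum_dite_val_lt {M : Type*} [AddCommMonoid M] {d k : ℕ} (hdk : d ≤ k)
    (g : Fin d → M) (c : M) :
    ∑ a : Fin k, (if h : (a : ℕ) < d then g ⟨a, h⟩ else c) = ∑ j, g j + (k - d) • c := by
  obtain ⟨r, rfl⟩ := Nat.exists_eq_add_of_le hdk
  simp [Fin.sum_univ_add]

section Cube

variable {k d n : ℕ}

def InCube (x : Fin n → Fin k) (z : Fin n → Fin d) : Prop :=
  ∀ t, (x t : ℕ) < d → (z t : ℕ) = x t

instance (x : Fin n → Fin k) (z : Fin n → Fin d) : Decidable (InCube x z) :=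
  by unfold InCube; infer_instance

@[simp]
theorem inCube_cons {a : Fin k} {y : Fin n → Fin k} {j : Fin d} {w : Fin n → Fin d} :
    InCube (Fin.cons a y : Fin (n + 1) → Fin k) (Fin.cons j w) ↔
      ((a : ℕ) < d → (j : ℕ) = a) ∧ InCube y w :=
  Fin.forall_fin_succ

variable (k) in
def cubesInside (V : Finset (Fin n → Fin d)) : Finset (Fin n → Fin k) :=
  {x | ∀ z, InCube x z → z ∈ V}

def consSlice (V : Finset (Fin (n + 1) → Fin d)) (j : Fin d) : Finset (Fin n → Fin d) :=
  {w | Fin.cons j w ∈ V}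

/-- A first letter of `Σ_d` pins the first letter of the cube; any other letter leaves it free,
so the rest of the cube has to lie in every slice. -/
theorem card_cubesInside_succ (hdk : d ≤ k) (V : Finset (Fin (n + 1) → Fin d)) :
    #(cubesInside k V) = ∑ j, #(cubesInside k (consSlice V j)) +
      (k - d) * #(cubesInside k (univ.inf (consSlice V))) := by
  rw [cubesInside, card_filter_piFinSucc, ← smul_eq_mul, ← Fin.sum_dite_val_lt hdk]
  refine sum_congr rfl fun a _ => ?_
  split_ifs with ha
  · congr 1
    ext y
    simp only [cubesInside, consSlice, mem_filter, mem_univ, true_and, Fin.forall_fin_succ_pi,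
      inCube_cons, ha, forall_const]
    exact ⟨fun h w hw => h _ w ⟨rfl, hw⟩, fun h j w ⟨hj, hw⟩ => by
      obtain rfl : j = ⟨a, ha⟩ := Fin.ext hj
      exact h w hw⟩
  · congr 1
    ext y
    simp only [cubesInside, consSlice, mem_filter, mem_univ, true_and, Fin.forall_fin_succ_pi,
      inCube_cons, ha, mem_inf, false_imp_iff, true_and, forall_const]
    exact ⟨fun h w hw j => h j w hw, fun h j w hw => h w hw j⟩

theorem card_cubesInside_le (hd : 1 < d) (hdk : d ≤ k) (V : Finset (Fin n → Fin d)) :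
    (#(cubesInside k V) : ℝ) ≤ (#V : ℝ) ^ logb d k := by
  have hd' : (1 : ℝ) < d := by exact_mod_cast hd
  have hdk' : (d : ℝ) ≤ k := by exact_mod_cast hdk
  have hc : 1 ≤ logb d k := by
    rw [← logb_self_eq_one hd']
    exact logb_le_logb_of_le hd' (by linarith) hdk'
  have hdc : (d : ℝ) ^ logb d k = k := rpow_logb (by linarith) hd'.ne' (by linarith)
  induction n with
  | zero =>
    rcases V.eq_empty_or_nonempty with rfl | hV
    · simp [cubesInside, InCube, zero_rpow (by linarith : logb d k ≠ 0)]
    · calc (#(cubesInside k V) : ℝ) ≤ 1 := by exact_mod_cast card_le_one_of_subsingleton _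
        _ ≤ #V ^ logb d k := one_le_rpow (by exact_mod_cast hV.card_pos) (by linarith)
  | succ n ih =>
    set core := univ.inf (consSlice V)
    have hsum := (convexOn_rpow hc).sum_map_add_map_card_mul_le univ (t := #core)
      (v := fun j => (#(consSlice V j) : ℝ)) (by positivity)
      fun j _ => by exact_mod_cast card_le_card (inf_le (mem_univ j))
    -- `d ^ log_d k = k` turns the `d` copies of `core` on the left into `k` copies.
    rw [card_univ, Fintype.card_fin, mul_rpow (by positivity) (by positivity), hdc] at hsum
    have hV : (#V : ℝ) = ∑ j, (#(consSlice V j) : ℝ) := by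
      have h := card_filter_piFinSucc (· ∈ V)
      rw [filter_mem_eq_inter, univ_inter] at h
      exact_mod_cast h
    rw [card_cubesInside_succ hdk]
    push_cast [Nat.cast_sub hdk]
    calc ∑ j, (#(cubesInside k (consSlice V j)) : ℝ) + (k - d) * #(cubesInside k core)
        ≤ ∑ j, (#(consSlice V j) : ℝ) ^ logb d k + (k - d) * (#core : ℝ) ^ logb d k := by
          gcongr with j <;> exact ih _
      _ ≤ (#V : ℝ) ^ logb d k := by rw [hV]; linarith

theorem not_inCube_of_ne_of_lt {x y : Fin n → Fin k} {t : Fin n} (hne : x t ≠ y t)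
    (hx : (x t : ℕ) < d) (hy : (y t : ℕ) < d) {z : Fin n → Fin d} (hxz : InCube x z) :
    ¬ InCube y z :=
  fun hyz => hne (Fin.ext ((hxz t hx).symm.trans (hyz t hy)))

theorem card_mul_rpow_le_of_code (hd : 1 < d) (hdk : d ≤ k) {m₀ m₁ : ℕ}
    (x : Fin m₀ → Fin m₁ → Fin n → Fin k) (hinj : ∀ i, Function.Injective (x i))
    (hsep : ∀ i i' a a', i ≠ i' →
      ∃ t, x i a t ≠ x i' a' t ∧ (x i a t : ℕ) < d ∧ (x i' a' t : ℕ) < d) :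
    (m₀ : ℝ) * (m₁ : ℝ) ^ logb k d ≤ (d : ℝ) ^ n := by
  classical
  have hd' : (1 : ℝ) < d := by exact_mod_cast hd
  have hk' : (1 : ℝ) < k := by exact_mod_cast hd.trans_le hdk
  let V : Fin m₀ → Finset (Fin n → Fin d) := fun i => {z | ∃ a, InCube (x i a) z}
  have hdisj : (Set.univ : Set (Fin m₀)).PairwiseDisjoint V := by
    intro i _ i' _ hii'
    simp only [Function.onFun, disjoint_left, V, mem_filter, mem_univ, true_and]
    rintro z ⟨a, ha⟩ ⟨a', ha'⟩
    obtain ⟨t, hne, hx, hx'⟩ := hsep i i' a a' hii'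
    exact not_inCube_of_ne_of_lt hne hx hx' ha ha'
  have hcover (i : Fin m₀) : (m₁ : ℝ) ≤ (#(V i) : ℝ) ^ logb d k := by
    refine le_trans ?_ (card_cubesInside_le hd hdk (V i))
    have hsub : univ.image (x i) ⊆ cubesInside k (V i) := by
      simp only [subset_iff, mem_image, mem_univ, true_and, cubesInside, mem_filter, V]
      rintro _ ⟨a, rfl⟩ z hz
      exact ⟨a, hz⟩
    have := card_le_card hsub
    rw [card_image_of_injective _ (hinj i), card_univ, Fintype.card_fin] at this
    exact_mod_cast this
  have hlow (i : Fin m₀) : (m₁ : ℝ) ^ logb k d ≤ #(V i) := by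
    calc (m₁ : ℝ) ^ logb k d ≤ ((#(V i) : ℝ) ^ logb d k) ^ logb k d :=
          rpow_le_rpow (by positivity) (hcover i) (logb_nonneg hk' hd'.le)
      _ = #(V i) := by
          rw [← rpow_mul (by positivity), mul_logb (by linarith) hk'.ne' (by linarith),
            logb_self_eq_one hd', rpow_one]
  calc (m₀ : ℝ) * m₁ ^ logb k d = ∑ _i : Fin m₀, (m₁ : ℝ) ^ logb k d := by simp
    _ ≤ ∑ i, (#(V i) : ℝ) := sum_le_sum fun i _ => hlow i
    _ = #(univ.biUnion V) := by rw [card_biUnion (by simpa using hdisj)]; push_cast; rfl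
    _ ≤ d ^ n := by exact_mod_cast (card_le_univ _).trans (by simp)

theorem logb_add_logb_le_of_feasibleAtLength (hd : 1 < d) (hdk : d ≤ k)
    {G : Fin 2 → SimpleGraph (Fin k)}
    (hG : ∀ a b : Fin k, a ≠ b → d ≤ a.val ∨ d ≤ b.val → (G 0).Adj a b)
    {m : Fin 2 → ℕ} (hm : ∀ i, 0 < m i) (h : FeasibleAtLength G m n) :
    logb d (m 0) + logb k (m 1) ≤ n := by
  obtain ⟨E, hE⟩ := h
  let msg (i : Fin (m 0)) (a : Fin (m 1)) : ∀ j, Fin (m j) := Fin.cons i (Fin.cons a finZeroElim)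
  let x (i : Fin (m 0)) (a : Fin (m 1)) : Fin n → Fin k := E (msg i a)
  have hinj (i : Fin (m 0)) : Function.Injective (x i) := by
    intro a a' haa'
    by_contra hne
    obtain ⟨t, hne', -⟩ := hE 1 (msg i a) (msg i a') (by simpa [msg] using hne)
    exact hne' (congrFun haa' t)
  have hsep (i i' : Fin (m 0)) (a a' : Fin (m 1)) (hii' : i ≠ i') :
      ∃ t, x i a t ≠ x i' a' t ∧ (x i a t : ℕ) < d ∧ (x i' a' t : ℕ) < d := by
    obtain ⟨t, hne, hnadj⟩ := hE 0 (msg i a) (msg i' a') (by simpa [msg] using hii')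
    have hlow := mt (hG _ _ hne) hnadj
    simp only [not_or, not_le] at hlow
    exact ⟨t, hne, hlow⟩
  have hd' : (1 : ℝ) < d := by exact_mod_cast hd
  have hm₀ : (0 : ℝ) < m 0 := by exact_mod_cast hm 0
  have hm₁ : (0 : ℝ) < m 1 := by exact_mod_cast hm 1
  have hcode := logb_le_logb_of_le hd' (by positivity)
    (card_mul_rpow_le_of_code hd hdk x hinj hsep)
  rwa [logb_mul hm₀.ne' (by positivity), logb_rpow_eq_mul_logb_of_pos hm₁,
    mul_logb (by linarith) hd'.ne' (by linarith), logb_pow, logb_self_eq_one hd', mul_one]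
    at hcode

theorem FeasibleRate.div_logb_add_div_logb_le (hd : 1 < d) (hdk : d ≤ k)
    {G : Fin 2 → SimpleGraph (Fin k)}
    (hG : ∀ a b : Fin k, a ≠ b → d ≤ a.val ∨ d ≤ b.val → (G 0).Adj a b)
    {R : Fin 2 → ℝ} (hR : FeasibleRate G R) :
    R 0 / logb 2 d + R 1 / logb 2 k ≤ 1 := by
  obtain ⟨-, m, hm, hfeas, hlim⟩ := hR
  have hchange (b x : ℝ) : logb 2 x / logb 2 b = logb b x :=
    div_div_div_cancel_right₀ (log_pos one_lt_two).ne' _ _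
  refine le_of_tendsto (((hlim 0).div_const _).add ((hlim 1).div_const _))
    (Filter.eventually_atTop.2 ⟨1, fun n hn => ?_⟩)
  rw [div_right_comm, hchange, div_right_comm, hchange, ← add_div,
    div_le_one (by exact_mod_cast hn)]
  exact logb_add_logb_le_of_feasibleAtLength hd hdk hG (hm n) (hfeas n)

end Cube

section Feasibility

variable {k r : ℕ} {G : Fin r → SimpleGraph (Fin k)}

theorem feasibleAtLength_one_zero : FeasibleAtLength G 1 0 :=
  ⟨fun _ => finZeroElim, fun _ _ _ hab => absurd (Subsingleton.elim (α := Fin 1) _ _) hab⟩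

theorem FeasibleAtLength.append {m m' : Fin r → ℕ} {n n' : ℕ} (h : FeasibleAtLength G m n)
    (h' : FeasibleAtLength G m' n') : FeasibleAtLength G (m * m') (n + n') := by
  obtain ⟨E, hE⟩ := h
  obtain ⟨E', hE'⟩ := h'
  refine ⟨fun a => Fin.append (E fun i => (finProdFinEquiv.symm (a i)).1)
    (E' fun i => (finProdFinEquiv.symm (a i)).2), fun i a b hab => ?_⟩
  have hne := finProdFinEquiv.symm.injective.ne hab
  rw [Ne, Prod.ext_iff, not_and_or] at hne
  rcases hne with hne | hne
  · obtain ⟨t, ht⟩ := hE i (fun j => (finProdFinEquiv.symm (a j)).1)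
      (fun j => (finProdFinEquiv.symm (b j)).1) hne
    exact ⟨Fin.castAdd n' t, by simpa using ht⟩
  · obtain ⟨t, ht⟩ := hE' i (fun j => (finProdFinEquiv.symm (a j)).2)
      (fun j => (finProdFinEquiv.symm (b j)).2) hne
    exact ⟨Fin.natAdd n t, by simpa using ht⟩

theorem FeasibleAtLength.pow {m : Fin r → ℕ} (h : FeasibleAtLength G m 1) (s : ℕ) :
    FeasibleAtLength G (m ^ s) s := by
  induction s with
  | zero => simpa using feasibleAtLength_one_zero
  | succ s ih => rw [pow_succ]; exact ih.append h

end Feasibility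

section TimeSharing

variable {k d : ℕ} {G : Fin 2 → SimpleGraph (Fin k)}

theorem feasibleAtLength_lowLetter (hdk : d ≤ k)
    (hG : ∀ a b : Fin k, (G 0).Adj a b → d ≤ a.val ∨ d ≤ b.val) :
    FeasibleAtLength G ![d, 1] 1 := by
  refine ⟨fun a _ => Fin.castLE hdk (a 0), fun i a b hab => ?_⟩
  fin_cases i
  · refine ⟨0, (Fin.castLE_injective hdk).ne hab, fun hadj => ?_⟩
    rcases hG _ _ hadj with h | h
    exacts [h.not_gt (a 0).isLt, h.not_gt (b 0).isLt]
  · exact absurd (Subsingleton.elim (α := Fin 1) _ _) hab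

theorem feasibleAtLength_letter (hG : G 1 = ⊥) : FeasibleAtLength G ![1, k] 1 := by
  refine ⟨fun a _ => a 1, fun i a b hab => ?_⟩
  fin_cases i
  · exact absurd (Subsingleton.elim (α := Fin 1) _ _) hab
  · exact ⟨0, hab, by simp only [Fin.mk_one, hG]; exact (SimpleGraph.bot_adj _ _).1⟩

theorem feasibleAtLength_timeSharing (hdk : d ≤ k)
    (hG₀ : ∀ a b : Fin k, (G 0).Adj a b → d ≤ a.val ∨ d ≤ b.val) (hG₁ : G 1 = ⊥) {s n : ℕ}
    (hsn : s ≤ n) : FeasibleAtLength G ![d ^ s, k ^ (n - s)] n := by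
  have h := ((feasibleAtLength_lowLetter hdk hG₀).pow s).append
    ((feasibleAtLength_letter hG₁).pow (n - s))
  rw [Nat.add_sub_cancel' hsn] at h
  convert h using 1
  ext i
  fin_cases i <;> simp

theorem feasibleRate_timeSharing (hd : 1 < d) (hdk : d ≤ k)
    (hG₀ : ∀ a b : Fin k, (G 0).Adj a b → d ≤ a.val ∨ d ≤ b.val) (hG₁ : G 1 = ⊥) {α : ℝ}
    (hα₀ : 0 ≤ α) (hα₁ : α ≤ 1) :
    FeasibleRate G ![α * logb 2 d, (1 - α) * logb 2 k] := by
  have hd' : (1 : ℝ) ≤ d := by exact_mod_cast hd.le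
  have hk' : (1 : ℝ) ≤ k := by exact_mod_cast hd.le.trans hdk
  have hsn (n : ℕ) : ⌊α * n⌋₊ ≤ n :=
    Nat.floor_le_of_le (mul_le_of_le_one_left n.cast_nonneg hα₁)
  have hfrac : Filter.Tendsto (fun n : ℕ => (⌊α * n⌋₊ : ℝ) / n) Filter.atTop (nhds α) :=
    (tendsto_nat_floor_mul_div_atTop hα₀).comp tendsto_natCast_atTop_atTop
  refine ⟨fun i => ?_, fun n => ![d ^ ⌊α * n⌋₊, k ^ (n - ⌊α * n⌋₊)], fun n i => ?_,
    fun n => feasibleAtLength_timeSharing hdk hG₀ hG₁ (hsn n), fun i => ?_⟩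
  · fin_cases i
    · exact mul_nonneg hα₀ (logb_nonneg one_lt_two hd')
    · exact mul_nonneg (by linarith) (logb_nonneg one_lt_two hk')
  · fin_cases i <;> exact pow_pos (by omega) _
  · fin_cases i
    · refine (hfrac.mul_const (logb 2 d)).congr fun n => ?_
      simp only [Fin.zero_eta, Matrix.cons_val_zero, Nat.cast_pow, logb_pow]
      ring
    · refine ((tendsto_const_nhds.sub hfrac).mul_const (logb 2 k)).congr' ?_
      filter_upwards [Filter.eventually_ge_atTop 1] with n hn
      simp only [Fin.mk_one, Matrix.cons_val_one, Matrix.cons_val_fin_one, Nat.cast_pow, logb_pow,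
        Nat.cast_sub (hsn n)]
      field_simp

end TimeSharing

/-- Theorem 7: user 1 has the complete graph on `Σ_k` minus a clique on `Σ_d` (two distinct
letters are adjacent iff at least one lies outside the first `d` letters) and user 2 has the
empty confusion graph. Then for every `α ∈ [0,1]` the rate vector
`(α log₂ d, (1−α) log₂ k)` is optimal; in particular it is feasible, and every feasible
`(R₁, R₂)` with `R₁ ≥ α log₂ d` satisfies `R₂ ≤ (1−α) log₂ k`. -/
theorem optimal_cliqueMinusClique_empty (k d : ℕ) (hd : 2 ≤ d) (hdk : d ≤ k)
    (G : Fin 2 → SimpleGraph (Fin k))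
    (hG1 : ∀ a b : Fin k, (G 0).Adj a b ↔ a ≠ b ∧ (d ≤ a.val ∨ d ≤ b.val))
    (hG2 : G 1 = ⊥)
    (α : ℝ) (hα : α ∈ Set.Icc (0 : ℝ) 1) :
    OptimalRate G ![α * Real.logb 2 d, (1 - α) * Real.logb 2 k] ∧
    FeasibleRate G ![α * Real.logb 2 d, (1 - α) * Real.logb 2 k] ∧
    (∀ R : Fin 2 → ℝ, FeasibleRate G R → α * Real.logb 2 d ≤ R 0 →
      R 1 ≤ (1 - α) * Real.logb 2 k) := by
  obtain ⟨hα₀, hα₁⟩ := hα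
  have hLd : 0 < logb 2 d := logb_pos one_lt_two (by exact_mod_cast hd)
  have hLk : 0 < logb 2 k := logb_pos one_lt_two (by exact_mod_cast hd.trans hdk)
  have hbound {R : Fin 2 → ℝ} (hR : FeasibleRate G R) : R 0 / logb 2 d + R 1 / logb 2 k ≤ 1 :=
    hR.div_logb_add_div_logb_le hd hdk fun a b hab h => (hG1 a b).2 ⟨hab, h⟩
  have hfeas := feasibleRate_timeSharing hd hdk (fun a b h => ((hG1 a b).1 h).2) hG2 hα₀ hα₁
  have hconv (R : Fin 2 → ℝ) (hR : FeasibleRate G R) (h₀ : α * logb 2 d ≤ R 0) :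
      R 1 ≤ (1 - α) * logb 2 k := by
    rw [← le_div_iff₀ hLd] at h₀
    rw [← div_le_iff₀ hLk]
    linarith [hbound hR]
  refine ⟨⟨hfeas, ?_, fun ⟨R₁, hlt, hR⟩ => hlt.not_ge (hconv _ hR le_rfl)⟩, hfeas, hconv⟩
  rintro ⟨R₀, hlt, hR⟩
  have h := hbound hR
  simp only [Matrix.cons_val_zero, Matrix.cons_val_one, mul_div_cancel_right₀ _ hLk.ne'] at h hlt
  rw [← lt_div_iff₀ hLd] at hlt
  linarith
end

section
/- Let 2 ≤ d ≤ (k+1)/2, let G_1 be the complete graph on Σ_k minus a clique on Σ_d, and let G_2, …, G_r be confusion graphs on Σ_k each of which contains the complement of G_1 as a subgraph, i.e. every pair {a,b} of distinct letters of Σ_d is an edge of G_i for every 2 ≤ i ≤ r. Then for every α ∈ [0,1], every feasible rate vector of the form (α·log₂ d, R_2, …, R_r) satisfies Σ_{i=2}^{r} R_i ≤ (1−α)·log₂(k−d+1). -/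
/-!
Fix the message of user `0` and consider the codewords that remain, one for each choice of the
other messages. The other users confuse all letters of `D = Σ_d`, so these codewords are already
told apart by their collapse, the word in which every letter of `D` is blanked out. User `0`
distinguishes only letters of `D`, so the words over `D` compatible with the codewords (their
completions) form disjoint sets for different messages of user `0`, with at most `d ^ n` elements
altogether. An induction on the length, splitting words by their first letter and using the
convexity of `t ↦ t ^ μ`, shows that a family with distinct collapses has at most
`#(completions) ^ μ` members as soon as `μ ≥ 1` and `d ^ μ ≥ k - d + 1`. With
`μ = log_d (k - d + 1)`, which is at least `1` because `2 d ≤ k + 1`, this gives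
`m₀ ^ μ * ∏_{i ≠ 0} mᵢ ≤ (k - d + 1) ^ n`; taking logarithms and letting `n → ∞` gives
`μ R₀ + ∑_{i ≠ 0} Rᵢ ≤ log₂ (k - d + 1)`, which is the claim since `μ log₂ d = log₂ (k - d + 1)`.
-/

open Finset

theorem ConvexOn.map_add_map_le_of_add_eq {f : ℝ → ℝ} {s : Set ℝ} (hf : ConvexOn ℝ s f)
    {a b c d : ℝ} (ha : a ∈ s) (hd : d ∈ s) (hab : a ≤ b) (hbd : b ≤ d) (hac : a ≤ c)
    (hcd : c ≤ d) (hsum : b + c = a + d) : f b + f c ≤ f a + f d := by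
  obtain rfl | had := (hab.trans hbd).eq_or_lt
  · obtain rfl : b = a := le_antisymm hbd hab
    obtain rfl : c = b := le_antisymm hcd hac
    rfl
  set θ := (d - b) / (d - a)
  have hθ₀ : 0 ≤ θ := div_nonneg (by linarith) (by linarith)
  have hθ₁ : 0 ≤ 1 - θ := by
    rw [sub_nonneg, div_le_one (by linarith)]
    linarith
  have hb := hf.2 ha hd hθ₀ hθ₁ (by ring)
  have hc := hf.2 ha hd hθ₁ hθ₀ (by ring)
  have eb : θ • a + (1 - θ) • d = b := by
    simp only [θ, smul_eq_mul]
    field_simp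
    ring
  have ec : (1 - θ) • a + θ • d = c := by
    rw [show c = a + d - b by linarith]
    simp only [θ, smul_eq_mul]
    field_simp
    ring
  rw [eb] at hb
  rw [ec] at hc
  simp only [smul_eq_mul] at hb hc
  linarith

theorem Real.add_rpow_add_le_rpow {x p D μ : ℝ} (hx : 0 ≤ x) (hp : 0 ≤ p) (hD : 1 ≤ D)
    (hμ : 1 ≤ μ) : (x + p) ^ μ + (D ^ μ - 1) * p ^ μ ≤ (x + D * p) ^ μ := by
  have hpD : p ≤ D * p := le_mul_of_one_le_left hp hD
  have := (convexOn_rpow hμ).map_add_map_le_of_add_eq (a := p) (b := x + p) (c := D * p)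
    (d := x + D * p) hp (by simp only [Set.mem_Ici]; linarith) (by linarith) (by linarith) hpD
    (by linarith) (by ring)
  rw [Real.mul_rpow (by linarith) hp] at this
  linarith

section Completions

variable {V : Type*}

noncomputable def consPreimage {n : ℕ} (R : Finset (Fin (n + 1) → V)) (a : V) :
    Finset (Fin n → V) :=
  R.preimage (Fin.cons (α := fun _ => V) a) (Fin.cons_right_injective _).injOn

@[simp]
theorem mem_consPreimage {n : ℕ} {R : Finset (Fin (n + 1) → V)} {a : V} {y : Fin n → V} :
    y ∈ consPreimage R a ↔ Fin.cons a y ∈ R :=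
  Finset.mem_preimage

theorem card_eq_sum_card_consPreimage [Fintype V] [DecidableEq V] {n : ℕ}
    (R : Finset (Fin (n + 1) → V)) : #R = ∑ a, #(consPreimage R a) := by
  rw [card_eq_sum_card_fiberwise (f := fun x => x 0) (t := univ) fun _ _ => mem_univ _]
  refine sum_congr rfl fun a _ =>
    card_nbij' Fin.tail (Fin.cons (α := fun _ => V) a) ?_ ?_ ?_ ?_
  · intro x hx
    obtain ⟨hx, rfl⟩ := by simpa using hx
    simpa
  · intro y hy
    simp_all
  · intro x hx
    obtain ⟨-, rfl⟩ := by simpa using hx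
    simp
  · intro y _
    simp

variable [DecidableEq V] (D : Finset V)

def collapse (a : V) : Option V := if a ∈ D then none else some a

def completions {n : ℕ} (R : Finset (Fin n → V)) : Finset (Fin n → V) :=
  {ρ ∈ Fintype.piFinset fun _ => D | ∃ x ∈ R, ∀ t, x t ∈ D → ρ t = x t}

variable {D}

theorem mem_completions {n : ℕ} {R : Finset (Fin n → V)} {ρ : Fin n → V} :
    ρ ∈ completions D R ↔ (∀ t, ρ t ∈ D) ∧ ∃ x ∈ R, ∀ t, x t ∈ D → ρ t = x t := by
  simp [completions]

theorem completions_biUnion_subset {ι : Type*} [DecidableEq ι] {n : ℕ} (s : Finset ι)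
    (R : ι → Finset (Fin n → V)) :
    completions D (s.biUnion R) ⊆ s.biUnion fun i => completions D (R i) := by
  intro ρ
  simp only [mem_completions, mem_biUnion]
  exact fun ⟨hρ, x, ⟨i, hi, hx⟩, hρx⟩ => ⟨i, hi, hρ, x, hx, hρx⟩

theorem cons_mem_completions {n : ℕ} {R : Finset (Fin (n + 1) → V)} {δ : V} {σ : Fin n → V} :
    Fin.cons δ σ ∈ completions D R ↔
      δ ∈ D ∧ ∃ a, (a ∈ D → δ = a) ∧ σ ∈ completions D (consPreimage R a) := by
  simp only [mem_completions, Fin.forall_fin_succ, Fin.cons_zero, Fin.cons_succ,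
    mem_consPreimage]
  constructor
  · rintro ⟨⟨hδ, hσ⟩, x, hx, hx0, hxσ⟩
    exact ⟨hδ, x 0, hx0, hσ, Fin.tail x, by simpa using hx, hxσ⟩
  · rintro ⟨hδ, a, ha, hσ, y, hy, hyσ⟩
    exact ⟨⟨hδ, hσ⟩, Fin.cons a y, hy, by simpa using ha, by simpa using hyσ⟩

theorem consPreimage_completions_of_not_mem {n : ℕ} (R : Finset (Fin (n + 1) → V)) {b : V}
    (hb : b ∉ D) : consPreimage (completions D R) b = ∅ := by
  ext σ
  simp [cons_mem_completions, hb]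

variable [Fintype V]

theorem consPreimage_completions_of_mem {n : ℕ} (R : Finset (Fin (n + 1) → V)) {δ : V}
    (hδ : δ ∈ D) :
    consPreimage (completions D R) δ = completions D (consPreimage R δ) ∪
      Dᶜ.biUnion fun b => completions D (consPreimage R b) := by
  ext σ
  simp only [mem_consPreimage, cons_mem_completions, hδ, true_and, mem_union, mem_biUnion,
    mem_compl]
  constructor
  · rintro ⟨a, ha, hσ⟩
    by_cases haD : a ∈ D
    · obtain rfl := ha haD
      exact Or.inl hσ
    · exact Or.inr ⟨a, haD, hσ⟩
  · rintro (hσ | ⟨b, hb, hσ⟩)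
    · exact ⟨δ, fun _ => rfl, hσ⟩
    · exact ⟨b, fun h => absurd h hb, hσ⟩

theorem card_completions {n : ℕ} (R : Finset (Fin (n + 1) → V)) :
    #(completions D R) = ∑ δ ∈ D, #(completions D (consPreimage R δ) \
      Dᶜ.biUnion fun b => completions D (consPreimage R b)) +
      #D * #(Dᶜ.biUnion fun b => completions D (consPreimage R b)) := by
  rw [card_eq_sum_card_consPreimage, ← sum_add_sum_compl D, ← smul_eq_mul, ← sum_const,
    ← sum_add_distrib]
  have hcompl : ∑ b ∈ Dᶜ, #(consPreimage (completions D R) b) = 0 := sum_eq_zero fun b hb => by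
    rw [consPreimage_completions_of_not_mem R (mem_compl.1 hb), card_empty]
  rw [hcompl, add_zero]
  refine sum_congr rfl fun δ hδ => ?_
  rw [consPreimage_completions_of_mem R hδ, card_sdiff_add_card]

theorem card_completions_biUnion_consPreimage_le {n : ℕ} (R : Finset (Fin (n + 1) → V)) :
    #(completions D (D.biUnion (consPreimage R))) ≤ ∑ δ ∈ D, #(completions D (consPreimage R δ) \
      Dᶜ.biUnion fun b => completions D (consPreimage R b)) +
      #(Dᶜ.biUnion fun b => completions D (consPreimage R b)) := by
  set P := Dᶜ.biUnion fun b => completions D (consPreimage R b)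
  have hsub : completions D (D.biUnion (consPreimage R)) ⊆
      (D.biUnion fun δ => completions D (consPreimage R δ) \ P) ∪ P := by
    refine (completions_biUnion_subset D _).trans fun ρ hρ => ?_
    obtain ⟨δ, hδ, hρ⟩ := mem_biUnion.1 hρ
    by_cases hP : ρ ∈ P
    · exact mem_union_right _ hP
    · exact mem_union_left _ (mem_biUnion.2 ⟨δ, hδ, mem_sdiff.2 ⟨hρ, hP⟩⟩)
  exact (card_le_card hsub).trans
    ((card_union_le _ _).trans (Nat.add_le_add_right card_biUnion_le _))

end Completions

section Collapse

variable {V : Type*} [DecidableEq V] {D : Finset V} {n : ℕ} {R : Finset (Fin (n + 1) → V)}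

theorem injOn_collapse_consPreimage (hR : Set.InjOn (fun x : Fin (n + 1) → V => collapse D ∘ x) R)
    (a : V) : Set.InjOn (fun y : Fin n → V => collapse D ∘ y) (consPreimage R a) := by
  intro y hy y' hy' h
  have := hR (mem_consPreimage.1 hy) (mem_consPreimage.1 hy') <| by
    simp only [Fin.comp_cons] at h ⊢
    rw [h]
  exact Fin.cons_right_injective _ this

theorem eq_of_collapse_eq_of_mem_consPreimage
    (hR : Set.InjOn (fun x : Fin (n + 1) → V => collapse D ∘ x) R) {δ δ' : V} (hδ : δ ∈ D)
    (hδ' : δ' ∈ D) {y y' : Fin n → V} (hy : y ∈ consPreimage R δ)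
    (hy' : y' ∈ consPreimage R δ') (h : collapse D ∘ y = collapse D ∘ y') : δ = δ' ∧ y = y' :=
  Fin.cons_inj.1 <| hR (mem_consPreimage.1 hy) (mem_consPreimage.1 hy') <| by
    simp only [Fin.comp_cons, h, collapse, hδ, hδ', if_true]

theorem card_biUnion_consPreimage
    (hR : Set.InjOn (fun x : Fin (n + 1) → V => collapse D ∘ x) R) :
    #(D.biUnion (consPreimage R)) = ∑ δ ∈ D, #(consPreimage R δ) :=
  card_biUnion fun _ hδ _ hδ' hne => disjoint_left.2 fun _ hy hy' =>
    hne (eq_of_collapse_eq_of_mem_consPreimage hR hδ hδ' hy hy' rfl).1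

theorem injOn_collapse_biUnion_consPreimage
    (hR : Set.InjOn (fun x : Fin (n + 1) → V => collapse D ∘ x) R) :
    Set.InjOn (fun y : Fin n → V => collapse D ∘ y) (D.biUnion (consPreimage R)) := by
  intro y hy y' hy' h
  obtain ⟨δ, hδ, hy⟩ := mem_biUnion.1 hy
  obtain ⟨δ', hδ', hy'⟩ := mem_biUnion.1 hy'
  exact (eq_of_collapse_eq_of_mem_consPreimage hR hδ hδ' hy hy' h).2

end Collapse

theorem card_le_card_completions_rpow {V : Type*} [Fintype V] [DecidableEq V] {D : Finset V}
    {μ : ℝ} (hμ : 1 ≤ μ) (hD : (#Dᶜ : ℝ) + 1 ≤ (#D : ℝ) ^ μ) {n : ℕ} (R : Finset (Fin n → V))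
    (hR : Set.InjOn (fun x : Fin n → V => collapse D ∘ x) R) :
    (#R : ℝ) ≤ (#(completions D R) : ℝ) ^ μ := by
  have hD1 : (1 : ℝ) ≤ #D := by
    rcases Nat.eq_zero_or_pos #D with h | h
    · rw [h, Nat.cast_zero, Real.zero_rpow (by positivity)] at hD
      linarith [(#Dᶜ).cast_nonneg (α := ℝ)]
    · exact_mod_cast h
  induction n with
  | zero =>
    obtain rfl | ⟨x, hx⟩ := R.eq_empty_or_nonempty
    · simp [Real.rpow_nonneg]
    have hR1 : #R ≤ 1 := card_le_one.2 fun _ _ _ _ => Subsingleton.elim _ _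
    have hC : 1 ≤ #(completions D R) :=
      card_pos.2 ⟨x, mem_completions.2 ⟨finZeroElim, x, hx, finZeroElim⟩⟩
    calc (#R : ℝ) ≤ 1 := by exact_mod_cast hR1
      _ ≤ _ := Real.one_le_rpow (by exact_mod_cast hC) (by linarith)
  | succ n ih =>
    set P := Dᶜ.biUnion fun b => completions D (consPreimage R b)
    set q := ∑ δ ∈ D, #(completions D (consPreimage R δ) \ P)
    have hfirstInD : (∑ δ ∈ D, #(consPreimage R δ) : ℝ) ≤ ((q : ℝ) + #P) ^ μ := calc
      (∑ δ ∈ D, #(consPreimage R δ) : ℝ) = #(D.biUnion (consPreimage R)) := by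
        rw [card_biUnion_consPreimage hR, Nat.cast_sum]
      _ ≤ #(completions D (D.biUnion (consPreimage R))) ^ μ :=
        ih _ (injOn_collapse_biUnion_consPreimage hR)
      _ ≤ ((q : ℝ) + #P) ^ μ := by
        gcongr
        exact_mod_cast card_completions_biUnion_consPreimage_le R
    have hfirstNotInD : (∑ b ∈ Dᶜ, #(consPreimage R b) : ℝ) ≤ #Dᶜ * (#P : ℝ) ^ μ := by
      rw [← nsmul_eq_mul]
      refine sum_le_card_nsmul _ _ _ fun b hb =>
        (ih _ (injOn_collapse_consPreimage hR b)).trans ?_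
      gcongr
      exact subset_biUnion_of_mem (fun b => completions D (consPreimage R b)) hb
    calc (#R : ℝ) = ∑ δ ∈ D, (#(consPreimage R δ) : ℝ) + ∑ b ∈ Dᶜ, (#(consPreimage R b) : ℝ) := by
          rw [card_eq_sum_card_consPreimage, ← sum_add_sum_compl D]
          push_cast
          rfl
      _ ≤ ((q : ℝ) + #P) ^ μ + ((#D : ℝ) ^ μ - 1) * (#P : ℝ) ^ μ :=
          add_le_add hfirstInD (hfirstNotInD.trans (by gcongr; linarith))
      _ ≤ ((q : ℝ) + #D * #P) ^ μ :=
          Real.add_rpow_add_le_rpow (by positivity) (by positivity) hD1 hμ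
      _ = #(completions D R) ^ μ := by
          rw [card_completions]
          norm_cast

section Codes

variable {k r n : ℕ} {G : Fin r → SimpleGraph (Fin k)} {m : Fin r → ℕ}
  {E : (∀ i, Fin (m i)) → Fin n → Fin k}

def IsDecodable (G : Fin r → SimpleGraph (Fin k)) (E : (∀ i, Fin (m i)) → Fin n → Fin k) :
    Prop :=
  ∀ i a b, a i ≠ b i → ∃ t, E a t ≠ E b t ∧ ¬ (G i).Adj (E a t) (E b t)

def codewordsWith (E : (∀ i, Fin (m i)) → Fin n → Fin k) (i₀ : Fin r) (a₀ : Fin (m i₀)) :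
    Finset (Fin n → Fin k) :=
  ({a | a i₀ = a₀} : Finset (∀ i, Fin (m i))).image E

theorem IsDecodable.injective (hE : IsDecodable G E) : Function.Injective E := by
  intro a b hab
  by_contra hne
  obtain ⟨i, hi⟩ := Function.ne_iff.1 hne
  obtain ⟨t, ht, -⟩ := hE i a b hi
  exact ht (congrFun hab t)

theorem card_codewordsWith (hE : IsDecodable G E) (i₀ : Fin r) (a₀ : Fin (m i₀)) :
    #(codewordsWith E i₀ a₀) = ∏ i ∈ univ.erase i₀, m i := by
  rw [codewordsWith, card_image_of_injective _ hE.injective]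
  convert Fintype.card_filter_piFinset_eq_of_mem (fun i => (univ : Finset (Fin (m i)))) i₀
    (mem_univ a₀) using 1 <;> simp

theorem injOn_collapse_codewordsWith (hE : IsDecodable G E) {i₀ : Fin r} {D : Finset (Fin k)}
    (hrest : ∀ i ≠ i₀, ∀ a ∈ D, ∀ b ∈ D, a ≠ b → (G i).Adj a b) (a₀ : Fin (m i₀)) :
    Set.InjOn (fun x : Fin n → Fin k => collapse D ∘ x) (codewordsWith E i₀ a₀) := by
  simp only [codewordsWith, coe_image, coe_filter, mem_univ, true_and]
  rintro _ ⟨a, ha, rfl⟩ _ ⟨b, hb, rfl⟩ h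
  by_contra hne
  obtain ⟨i, hi⟩ := Function.ne_iff.1 (mt (congrArg E) hne)
  have hi₀ : i ≠ i₀ := by
    rintro rfl
    exact hi (ha.trans hb.symm)
  obtain ⟨t, ht, hadj⟩ := hE i a b hi
  have hcollapse := congrFun h t
  simp only [Function.comp_apply, collapse] at hcollapse
  split_ifs at hcollapse with haD hbD hbD
  · exact hadj (hrest i hi₀ _ haD _ hbD ht)
  · exact ht (Option.some_injective _ hcollapse)

theorem disjoint_completions_codewordsWith (hE : IsDecodable G E) {i₀ : Fin r}
    {D : Finset (Fin k)} (h₀ : ∀ a b, a ≠ b → ¬ (G i₀).Adj a b → a ∈ D ∧ b ∈ D)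
    {a₀ b₀ : Fin (m i₀)} (hne : a₀ ≠ b₀) :
    Disjoint (completions D (codewordsWith E i₀ a₀)) (completions D (codewordsWith E i₀ b₀)) := by
  refine disjoint_left.2 fun ρ hρa hρb => ?_
  obtain ⟨-, _, hx, hρx⟩ := mem_completions.1 hρa
  obtain ⟨-, _, hy, hρy⟩ := mem_completions.1 hρb
  simp only [codewordsWith, mem_image, mem_filter, mem_univ, true_and] at hx hy
  obtain ⟨a, rfl, rfl⟩ := hx
  obtain ⟨b, rfl, rfl⟩ := hy
  obtain ⟨t, ht, hadj⟩ := hE i₀ a b hne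
  obtain ⟨haD, hbD⟩ := h₀ _ _ ht hadj
  exact ht ((hρx t haD).symm.trans (hρy t hbD))

end Codes

theorem FeasibleAtLength.rpow_mul_prod_le {k r n : ℕ} {G : Fin r → SimpleGraph (Fin k)}
    {m : Fin r → ℕ} (hf : FeasibleAtLength G m n) {i₀ : Fin r} {D : Finset (Fin k)}
    (h₀ : ∀ a b, a ≠ b → ¬ (G i₀).Adj a b → a ∈ D ∧ b ∈ D)
    (hrest : ∀ i ≠ i₀, ∀ a ∈ D, ∀ b ∈ D, a ≠ b → (G i).Adj a b) {μ : ℝ} (hμ : 1 ≤ μ)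
    (hD : (#Dᶜ : ℝ) + 1 ≤ (#D : ℝ) ^ μ) :
    (m i₀ : ℝ) ^ μ * ∏ i ∈ univ.erase i₀, (m i : ℝ) ≤ ((#D : ℝ) ^ μ) ^ n := by
  obtain ⟨E, hE⟩ := hf
  rcases Nat.eq_zero_or_pos (m i₀) with hm | hm
  · simp [hm, Real.zero_rpow (by linarith : μ ≠ 0), Real.rpow_nonneg, pow_nonneg]
  obtain ⟨a₀, -, hmin⟩ := exists_min_image univ
    (fun a₀ => #(completions D (codewordsWith E i₀ a₀))) ⟨⟨0, hm⟩, mem_univ _⟩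
  set T := #(completions D (codewordsWith E i₀ a₀))
  have hsum : m i₀ * T ≤ #D ^ n := calc
    m i₀ * T ≤ ∑ b₀, #(completions D (codewordsWith E i₀ b₀)) := by
      simpa using card_nsmul_le_sum univ _ T fun b₀ _ => hmin b₀ (mem_univ _)
    _ = #(univ.biUnion fun b₀ => completions D (codewordsWith E i₀ b₀)) :=
      (card_biUnion fun _ _ _ _ hne => disjoint_completions_codewordsWith hE h₀ hne).symm
    _ ≤ #(Fintype.piFinset fun _ : Fin n => D) :=
      card_le_card (biUnion_subset.2 fun _ _ => filter_subset _ _)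
    _ = #D ^ n := Fintype.card_piFinset_const D n
  have hrow : ∏ i ∈ univ.erase i₀, (m i : ℝ) ≤ (T : ℝ) ^ μ := by
    have := card_le_card_completions_rpow hμ hD _ (injOn_collapse_codewordsWith hE hrest a₀)
    rwa [card_codewordsWith hE, Nat.cast_prod] at this
  calc (m i₀ : ℝ) ^ μ * ∏ i ∈ univ.erase i₀, (m i : ℝ) ≤ (m i₀ : ℝ) ^ μ * (T : ℝ) ^ μ := by
        gcongr
    _ = ((m i₀ * T : ℕ) : ℝ) ^ μ := by
        push_cast
        rw [Real.mul_rpow (by positivity) (by positivity)]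
    _ ≤ ((#D ^ n : ℕ) : ℝ) ^ μ := by gcongr
    _ = ((#D : ℝ) ^ μ) ^ n := by
        push_cast
        rw [← Real.rpow_natCast, ← Real.rpow_natCast, ← Real.rpow_mul (by positivity),
          ← Real.rpow_mul (by positivity), mul_comm]

theorem FeasibleRate.mul_add_sum_le {k r : ℕ} {G : Fin r → SimpleGraph (Fin k)}
    {R : Fin r → ℝ} (hR : FeasibleRate G R) (i₀ : Fin r) {μ C : ℝ}
    (hbound : ∀ m n, FeasibleAtLength G m n →
      (m i₀ : ℝ) ^ μ * ∏ i ∈ univ.erase i₀, (m i : ℝ) ≤ C ^ n) :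
    μ * R i₀ + ∑ i ∈ univ.erase i₀, R i ≤ Real.logb 2 C := by
  obtain ⟨-, m, hm, hfeas, hlim⟩ := hR
  have hpos : ∀ n i, (0 : ℝ) < m n i := fun n i => Nat.cast_pos.2 (hm n i)
  have hlog (n : ℕ) : μ * Real.logb 2 (m n i₀) + ∑ i ∈ univ.erase i₀, Real.logb 2 (m n i) ≤
      n * Real.logb 2 C := by
    have hpow := Real.rpow_pos_of_pos (hpos n i₀) μ
    have hprod := prod_pos fun i (_ : i ∈ univ.erase i₀) => hpos n i
    have h := Real.logb_le_logb_of_le (b := 2) one_lt_two (mul_pos hpow hprod)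
      (hbound (m n) n (hfeas n))
    rwa [Real.logb_mul hpow.ne' hprod.ne', Real.logb_rpow_eq_mul_logb_of_pos (hpos n i₀),
      Real.logb_prod _ _ fun i _ => (hpos n i).ne', Real.logb_pow] at h
  have hnormalized : ∀ᶠ n : ℕ in Filter.atTop, μ * (Real.logb 2 (m n i₀) / n) +
      ∑ i ∈ univ.erase i₀, Real.logb 2 (m n i) / n ≤ Real.logb 2 C := by
    filter_upwards [Filter.eventually_gt_atTop 0] with n hn
    rw [← sum_div, mul_div_assoc', ← add_div, div_le_iff₀ (Nat.cast_pos.2 hn)]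
    linarith [hlog n]
  exact le_of_tendsto (((hlim i₀).const_mul μ).add (tendsto_finsetSum _ fun i _ => hlim i))
    hnormalized

theorem sum_rest_le_of_cliqueMinusClique_complements_general (k d r : ℕ) (hr : 0 < r)
    (hd : 2 ≤ d) (hdk : 2 * d ≤ k + 1)
    (G : Fin r → SimpleGraph (Fin k))
    (hG1 : ∀ a b : Fin k, (G ⟨0, hr⟩).Adj a b ↔ a ≠ b ∧ (d ≤ a.val ∨ d ≤ b.val))
    (hG2 : ∀ i : Fin r, i ≠ ⟨0, hr⟩ →
      ∀ a b : Fin k, a ≠ b → a.val < d → b.val < d → (G i).Adj a b)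
    (α : ℝ)
    (R : Fin r → ℝ) (hR : FeasibleRate G R) (hR0 : R ⟨0, hr⟩ = α * Real.logb 2 d) :
    ∑ i ∈ Finset.univ.erase (⟨0, hr⟩ : Fin r), R i ≤
      (1 - α) * Real.logb 2 ((k - d + 1 : ℕ) : ℝ) := by
  set D : Finset (Fin k) := {a | a.val < d}
  have hDcard : #D = d := by
    simp only [D, Fin.card_filter_val_lt]
    omega
  have hDcompl : #Dᶜ = k - d := by rw [card_compl, hDcard, Fintype.card_fin]
  have h₀ : ∀ a b, a ≠ b → ¬ (G ⟨0, hr⟩).Adj a b → a ∈ D ∧ b ∈ D := fun a b hab hadj => by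
    simpa [D, hG1, hab] using hadj
  have hrest : ∀ i ≠ ⟨0, hr⟩, ∀ a ∈ D, ∀ b ∈ D, a ≠ b → (G i).Adj a b :=
    fun i hi a ha b hb hab => hG2 i hi a b hab (by simpa [D] using ha) (by simpa [D] using hb)
  have hd1 : (1 : ℝ) < d := by exact_mod_cast hd
  set μ := Real.logb d ((k - d + 1 : ℕ) : ℝ)
  have hdμ : (d : ℝ) ^ μ = ((k - d + 1 : ℕ) : ℝ) :=
    Real.rpow_logb (by positivity) hd1.ne' (by positivity)
  have hμ : 1 ≤ μ := by
    rw [Real.le_logb_iff_rpow_le hd1 (by positivity), Real.rpow_one]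
    exact_mod_cast (by omega : d ≤ k - d + 1)
  have hbound := hR.mul_add_sum_le ⟨0, hr⟩ (C := ((k - d + 1 : ℕ) : ℝ)) fun m n hf => by
    simpa [hDcard, hdμ] using
      hf.rpow_mul_prod_le h₀ hrest hμ (by rw [hDcompl, hDcard, hdμ, Nat.cast_succ])
  have hμd : μ * Real.logb 2 d = Real.logb 2 ((k - d + 1 : ℕ) : ℝ) := by
    rw [mul_comm, Real.mul_logb (by positivity) hd1.ne' (by linarith)]
  rw [hR0] at hbound
  linear_combination hbound - α * hμd

/-- Corollary 14: if user 1 has the complete graph on `Σ_k` minus a clique on `Σ_d` with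
`2 ≤ d ≤ (k+1)/2`, and every other user's confusion graph contains the complement of `G 1`
(i.e. every pair of distinct letters of `Σ_d` is an edge of `G i` for `i ≠ 1`), then any
feasible rate vector `(α log₂ d, R₂, …, R_r)` with `α ∈ [0,1]` satisfies
`∑_{i=2}^r R i ≤ (1−α) log₂ (k−d+1)`. -/
theorem sum_rest_le_of_cliqueMinusClique_complements (k d r : ℕ) (hr : 0 < r)
    (hd : 2 ≤ d) (hdk : 2 * d ≤ k + 1)
    (G : Fin r → SimpleGraph (Fin k))
    (hG1 : ∀ a b : Fin k, (G ⟨0, hr⟩).Adj a b ↔ a ≠ b ∧ (d ≤ a.val ∨ d ≤ b.val))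
    (hG2 : ∀ i : Fin r, i ≠ ⟨0, hr⟩ →
      ∀ a b : Fin k, a ≠ b → a.val < d → b.val < d → (G i).Adj a b)
    (α : ℝ) (hα : α ∈ Set.Icc (0 : ℝ) 1)
    (R : Fin r → ℝ) (hR : FeasibleRate G R) (hR0 : R ⟨0, hr⟩ = α * Real.logb 2 d) :
    ∑ i ∈ Finset.univ.erase (⟨0, hr⟩ : Fin r), R i ≤
      (1 - α) * Real.logb 2 ((k - d + 1 : ℕ) : ℝ) :=
  sum_rest_le_of_cliqueMinusClique_complements_general k d r hr hd hdk G hG1 hG2 α R hR hR0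
end

section
/- Let a, b be natural numbers with 2 ≤ b ≤ a and let x_1 ≥ x_2 ≥ ⋯ ≥ x_b ≥ 0 be real numbers. Then (a − b + 1)·a^{log_b x_b} + Σ_{i=1}^{b−1} a^{log_b x_i} ≤ a^{log_b(Σ_{i=1}^{b} x_i)}. -/
/-!
Put `c = log_b a ≥ 1`, so that `a^{log_b z} = z^c` and `a·x_b^c = (b·x_b)^c`. Since `z ↦ z^c` is
convex, its increments `f (t + d) - f t` grow with `t`. Starting from `b·x_b` and adding the
excesses `x_i - x_b` one at a time, the `i`-th step therefore gains at least `x_i^c - x_b^c`, and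
the total is `∑ x_i`.
-/

/-- `a^{log_b x}` (that is, `a` raised to the real power `log_b x`), with the convention
`a^{log_b 0} = 0`. -/
noncomputable def alog (a b : ℕ) (x : ℝ) : ℝ :=
  if x = 0 then 0 else (a : ℝ) ^ Real.logb b x

open Finset

section Increments

variable {𝕜 : Type*} [Field 𝕜] [LinearOrder 𝕜] [IsStrictOrderedRing 𝕜] {s : Set 𝕜} {f : 𝕜 → 𝕜}

/-- With `θ = d / (t + d - v)`, the points `v + d` and `t` are the convex combinations
`(1 - θ) v + θ (t + d)` and `θ v + (1 - θ) (t + d)`; adding the two convexity inequalities gives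
`f (v + d) + f t ≤ f v + f (t + d)`. -/
theorem ConvexOn.map_add_sub_map_le_s14 (hf : ConvexOn 𝕜 s f) {v t d : 𝕜} (hv : v ∈ s)
    (htd : t + d ∈ s) (hvt : v ≤ t) (hd : 0 ≤ d) : f (v + d) - f v ≤ f (t + d) - f t := by
  rcases (show v ≤ t + d by linarith).eq_or_lt with hvtd | hvtd
  · obtain ⟨rfl, rfl⟩ : d = 0 ∧ t = v := by constructor <;> linarith
    simp
  have hw : 0 < t + d - v := sub_pos.2 hvtd
  set θ := d / (t + d - v)
  have hθ0 : 0 ≤ θ := div_nonneg hd hw.le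
  have hθ1 : 0 ≤ 1 - θ := by rw [sub_nonneg, div_le_one hw]; linarith
  have h₁ := hf.2 hv htd hθ1 hθ0 (by ring)
  have h₂ := hf.2 hv htd hθ0 hθ1 (by ring)
  have e₁ : (1 - θ) • v + θ • (t + d) = v + d := by
    simp only [smul_eq_mul, θ]; field_simp; ring
  have e₂ : θ • v + (1 - θ) • (t + d) = t := by
    simp only [smul_eq_mul, θ]; field_simp; ring
  rw [e₁] at h₁
  rw [e₂] at h₂
  simp only [smul_eq_mul] at h₁ h₂
  linarith

theorem ConvexOn.map_add_sum_sub_le {ι : Type*} {v t : 𝕜} (hf : ConvexOn 𝕜 (Set.Ici v) f)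
    (hvt : v ≤ t) (u : Finset ι) {y : ι → 𝕜} (hy : ∀ i ∈ u, v ≤ y i) :
    f t + ∑ i ∈ u, (f (y i) - f v) ≤ f (t + ∑ i ∈ u, (y i - v)) := by
  classical
  induction u using Finset.induction with
  | empty => simp
  | @insert j u hj ih =>
    rw [Finset.forall_mem_insert] at hy
    set T := t + ∑ i ∈ u, (y i - v)
    have hvT : v ≤ T := le_add_of_le_of_nonneg hvt (sum_nonneg fun i hi ↦ sub_nonneg.2 (hy.2 i hi))
    have hstep := hf.map_add_sub_map_le_s14 (Set.mem_Ici.2 le_rfl) (Set.mem_Ici.2 (by linarith [hy.1]))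
      hvT (sub_nonneg.2 hy.1)
    rw [add_sub_cancel, show T + (y j - v) = t + (y j - v + ∑ i ∈ u, (y i - v)) by ring] at hstep
    rw [sum_insert hj, sum_insert hj]
    linarith [ih hy.2]

end Increments

theorem alog_eq_rpow_logb {a b : ℕ} (ha : 1 < a) (hb : 1 < b) {z : ℝ} (hz : 0 ≤ z) :
    alog a b z = z ^ Real.logb b a := by
  have ha' : (1 : ℝ) < a := by exact_mod_cast ha
  have hb' : (1 : ℝ) < b := by exact_mod_cast hb
  rcases hz.eq_or_lt with rfl | hz
  · rw [alog, if_pos rfl, Real.zero_rpow (Real.logb_pos hb' ha').ne']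
  · rw [alog, if_neg hz.ne', Real.rpow_def_of_pos (by linarith), Real.rpow_def_of_pos hz,
      Real.logb, Real.logb]
    ring_nf

theorem one_le_logb_of_le {a b : ℝ} (hb : 1 < b) (hba : b ≤ a) : 1 ≤ Real.logb b a :=
  Real.logb_self_eq_one hb ▸ Real.logb_le_logb_of_le hb (by linarith) hba

theorem sum_Icc_one_eq_add_sum_Icc_one_pred {M : Type*} [AddCommMonoid M] {n : ℕ} (hn : 1 ≤ n)
    (f : ℕ → M) : ∑ i ∈ Icc 1 n, f i = f n + ∑ i ∈ Icc 1 (n - 1), f i := by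
  obtain ⟨m, rfl⟩ : ∃ m, n = m + 1 := ⟨n - 1, by omega⟩
  rw [sum_Icc_succ_top (by omega), Nat.add_sub_cancel, add_comm]

/-- Lemma 10: for naturals `2 ≤ b ≤ a` and reals `x₁ ≥ x₂ ≥ ⋯ ≥ x_b ≥ 0`,
`(a−b+1)·a^{log_b x_b} + ∑_{i=1}^{b−1} a^{log_b x_i} ≤ a^{log_b (∑_{i=1}^{b} x_i)}`. -/
theorem alog_sum_le (a b : ℕ) (hb : 2 ≤ b) (hba : b ≤ a) (x : ℕ → ℝ)
    (hanti : ∀ i j : ℕ, 1 ≤ i → i ≤ j → j ≤ b → x j ≤ x i) (hnn : 0 ≤ x b) :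
    ((a - b + 1 : ℕ) : ℝ) * alog a b (x b) + ∑ i ∈ Finset.Icc 1 (b - 1), alog a b (x i) ≤
      alog a b (∑ i ∈ Finset.Icc 1 b, x i) := by
  have hbR : (1 : ℝ) < b := by exact_mod_cast hb
  have hbaR : (b : ℝ) ≤ a := by exact_mod_cast hba
  have hxb : ∀ i ∈ Icc 1 (b - 1), x b ≤ x i := fun i hi ↦
    hanti i b (mem_Icc.1 hi).1 (by grind) le_rfl
  have hsplit := sum_Icc_one_eq_add_sum_Icc_one_pred (by omega : 1 ≤ b) x
  have hS : 0 ≤ ∑ i ∈ Icc 1 b, x i :=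
    hsplit ▸ add_nonneg hnn (sum_nonneg fun i hi ↦ hnn.trans (hxb i hi))
  rw [alog_eq_rpow_logb (by omega) (by omega) hnn, alog_eq_rpow_logb (by omega) (by omega) hS,
    sum_congr rfl fun i hi ↦ alog_eq_rpow_logb (by omega) (by omega) (hnn.trans (hxb i hi))]
  set c := Real.logb b a
  have key := ((convexOn_rpow (one_le_logb_of_le hbR hbaR)).subset
    (Set.Ici_subset_Ici.2 hnn) (convex_Ici _)).map_add_sum_sub_le
    (le_mul_of_one_le_left hnn hbR.le) (Icc 1 (b - 1)) hxb
  have hpow : ((b : ℝ) * x b) ^ c = a * x b ^ c := by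
    rw [Real.mul_rpow (by positivity) hnn, Real.rpow_logb (by positivity) hbR.ne' (by linarith)]
  have hcard : ((#(Icc 1 (b - 1)) : ℕ) : ℝ) = b - 1 := by
    rw [Nat.card_Icc, Nat.add_sub_cancel, Nat.cast_pred (by omega)]
  have hcoeff : ((a - b + 1 : ℕ) : ℝ) = a - (b - 1) := by
    rw [Nat.cast_add, Nat.cast_sub hba]; ring
  calc ((a - b + 1 : ℕ) : ℝ) * x b ^ c + ∑ i ∈ Icc 1 (b - 1), x i ^ c
      = ((b : ℝ) * x b) ^ c + ∑ i ∈ Icc 1 (b - 1), (x i ^ c - x b ^ c) := by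
        rw [hpow, hcoeff, sum_sub_distrib, sum_const, nsmul_eq_mul, hcard]; ring
    _ ≤ ((b : ℝ) * x b + ∑ i ∈ Icc 1 (b - 1), (x i - x b)) ^ c := key
    _ = (∑ i ∈ Icc 1 b, x i) ^ c := by
        rw [sum_sub_distrib, sum_const, nsmul_eq_mul, hcard, hsplit]; congr 1; ring
end

section
/- Let 2 ≤ d ≤ k be natural numbers, let n be a positive integer, and let 𝒢 ⊆ Σ_k^n be a set of strings that is closed under letter replacement: for every g ∈ 𝒢, every coordinate t at which g_t = σ_i with i > d, and every j ∈ {1,…,k}, the string obtained from g by replacing its t-th letter with σ_j also lies in 𝒢. Let 𝒢' = 𝒢 ∩ Σ_d^n. Then either 𝒢 and 𝒢' are both empty, or |𝒢| ≤ k^{log_d |𝒢'|}, i.e. log_k |𝒢| ≤ log_d |𝒢'|. -/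
/-!
Put `α = log_d k ≥ 1` and prove `|𝒢| ≤ |𝒢'| ^ α` by induction on `n`, splitting `𝒢` according
to the first letter. Closure under replacement makes the fiber of a letter `a ≥ d` a subset of
every other fiber, so by induction each such fiber has at most `m ^ α` elements, where `m` is the
least of the numbers `y_b` of low words in the fibers of the low letters `b < d`. Since `d ^ α = k`,
it remains to show `∑_{b<d} y_b ^ α + (k - d) m ^ α ≤ (∑_{b<d} y_b) ^ α`, which follows from the
convexity of `t ↦ t ^ α`: raising one `y_b` above `m` increases the right side at least as much as
the left. Finally `k ^ (log_d |𝒢'|) = |𝒢'| ^ (log_d k)`.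
-/

open Finset Real

theorem ConvexOn.map_add_add_map_le {𝕜 : Type*} [Field 𝕜] [LinearOrder 𝕜] [IsStrictOrderedRing 𝕜]
    {s : Set 𝕜} {f : 𝕜 → 𝕜} (hf : ConvexOn 𝕜 s f) {x y h : 𝕜} (hx : x ∈ s) (hyh : y + h ∈ s)
    (hxy : x ≤ y) (hh : 0 ≤ h) : f (x + h) + f y ≤ f x + f (y + h) := by
  rcases (add_le_add hxy hh).eq_or_lt with hD | hD
  · obtain rfl : y = x := by linarith
    obtain rfl : h = 0 := by linarith
    simp
  -- `x + h` and `y` are the convex combinations of `x` and `y + h` with swapped weights `a, b`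
  have hD' : 0 < y + h - x := by linarith
  set a := (y - x) / (y + h - x)
  set b := h / (y + h - x)
  have hab : a + b = 1 := by rw [← add_div, div_eq_one_iff_eq hD'.ne']; ring
  have ha : 0 ≤ a := div_nonneg (sub_nonneg.2 hxy) hD'.le
  have hb : 0 ≤ b := div_nonneg hh hD'.le
  have c₁ := hf.2 hx hyh ha hb hab
  have c₂ := hf.2 hx hyh hb ha (by rw [add_comm, hab])
  rw [show a • x + b • (y + h) = x + h by simp only [smul_eq_mul, a, b]; field_simp; ring] at c₁
  rw [show b • x + a • (y + h) = y by simp only [smul_eq_mul, a, b]; field_simp; ring] at c₂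
  simp only [smul_eq_mul] at c₁ c₂
  calc f (x + h) + f y ≤ (a + b) * f x + (a + b) * f (y + h) := by linarith
    _ = f x + f (y + h) := by rw [hab, one_mul, one_mul]

theorem ConvexOn.sum_add_map_card_mul_le {ι : Type*} {f : ℝ → ℝ}
    (hf : ConvexOn ℝ (Set.Ici 0) f) {m : ℝ} (hm : 0 ≤ m) {x : ι → ℝ} (s : Finset ι)
    (hx : ∀ i ∈ s, m ≤ x i) :
    ∑ i ∈ s, f (x i) + f (#s * m) ≤ f (∑ i ∈ s, x i) + #s * f m := by
  classical
  induction s using Finset.induction_on with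
  | empty => simp
  | @insert a s ha ih =>
    rw [forall_mem_insert] at hx
    have hsum : #s * m ≤ ∑ i ∈ s, x i := by
      simpa using card_nsmul_le_sum s x m hx.2
    have hsm : 0 ≤ (#s : ℝ) * m := by positivity
    have hxa : 0 ≤ x a := hm.trans hx.1
    have h₁ := hf.map_add_add_map_le hsm (Set.mem_Ici.2 (by linarith)) hsum hxa
    have h₂ := hf.map_add_add_map_le hm (Set.mem_Ici.2 (by linarith)) hx.1 hsm
    rw [add_comm m, add_comm (x a)] at h₂
    rw [sum_insert ha, sum_insert ha, card_insert_of_notMem ha, Nat.cast_succ, add_one_mul,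
      add_comm (x a)]
    linarith [ih hx.2]

section ConsFiber

variable {α : Type*} [Fintype α] [DecidableEq α] {n : ℕ}

def consFiber (𝒢 : Finset (Fin (n + 1) → α)) (a : α) : Finset (Fin n → α) :=
  {p | Fin.cons a p ∈ 𝒢}

@[simp]
theorem mem_consFiber {𝒢 : Finset (Fin (n + 1) → α)} {a : α} {p : Fin n → α} :
    p ∈ consFiber 𝒢 a ↔ Fin.cons a p ∈ 𝒢 := by
  simp [consFiber]

theorem card_eq_sum_card_consFiber (𝒢 : Finset (Fin (n + 1) → α)) :
    #𝒢 = ∑ a, #(consFiber 𝒢 a) := by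
  rw [← card_sigma]
  refine card_nbij' (fun g => ⟨g 0, Fin.tail g⟩) (fun q => Fin.cons q.1 q.2) ?_ ?_ ?_ ?_ <;>
    intro g <;> simp

end ConsFiber

section Replacement

variable {n k : ℕ}

/-- The words of `𝒢` over the first `d` letters: `𝒢' = 𝒢 ∩ Σ_d^n`. -/
def wordsBelow (d : ℕ) (𝒢 : Finset (Fin n → Fin k)) : Finset (Fin n → Fin k) :=
  𝒢.filter (fun g => ∀ t : Fin n, (g t).val < d)

def IsReplacementClosed (d : ℕ) (𝒢 : Finset (Fin n → Fin k)) : Prop :=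
  ∀ g ∈ 𝒢, ∀ t : Fin n, d ≤ (g t).val → ∀ j : Fin k, Function.update g t j ∈ 𝒢

theorem wordsBelow_mono (d : ℕ) : Monotone (wordsBelow (n := n) (k := k) d) :=
  fun _ _ h => filter_subset_filter _ h

theorem consFiber_wordsBelow (d : ℕ) (𝒢 : Finset (Fin (n + 1) → Fin k)) (a : Fin k) :
    consFiber (wordsBelow d 𝒢) a = if a.val < d then wordsBelow d (consFiber 𝒢 a) else ∅ := by
  ext p
  split_ifs with ha <;> simp [wordsBelow, Fin.forall_fin_succ, ha]

theorem card_wordsBelow_eq_sum (d : ℕ) (𝒢 : Finset (Fin (n + 1) → Fin k)) :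
    #(wordsBelow d 𝒢) = ∑ a with a.val < d, #(wordsBelow d (consFiber 𝒢 a)) := by
  rw [card_eq_sum_card_consFiber, sum_filter]
  simp only [consFiber_wordsBelow, apply_ite card, card_empty]

namespace IsReplacementClosed

variable {d : ℕ} {𝒢 : Finset (Fin (n + 1) → Fin k)}

theorem consFiber (h𝒢 : IsReplacementClosed d 𝒢) (a : Fin k) :
    IsReplacementClosed d (consFiber 𝒢 a) := by
  intro p hp t ht j
  rw [mem_consFiber, Fin.cons_update]
  exact h𝒢 _ (mem_consFiber.1 hp) t.succ ht j

theorem consFiber_subset (h𝒢 : IsReplacementClosed d 𝒢) {a : Fin k} (ha : d ≤ a.val) (b : Fin k) :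
    _root_.consFiber 𝒢 a ⊆ _root_.consFiber 𝒢 b := by
  intro p hp
  rw [mem_consFiber] at hp ⊢
  simpa using h𝒢 _ hp 0 ha b

end IsReplacementClosed

end Replacement

theorem Real.rpow_logb_comm {b x y : ℝ} (hb : 0 < b) (hb₁ : b ≠ 1) (hx : 0 < x) (hy : 0 < y) :
    x ^ logb b y = y ^ logb b x := by
  conv_lhs => rw [← rpow_logb hb hb₁ hx]
  conv_rhs => rw [← rpow_logb hb hb₁ hy]
  rw [← rpow_mul hb.le, ← rpow_mul hb.le, mul_comm]

theorem card_le_card_wordsBelow_rpow {k d n : ℕ} (hd : 2 ≤ d) (hdk : d ≤ k)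
    {𝒢 : Finset (Fin n → Fin k)} (h𝒢 : IsReplacementClosed d 𝒢) :
    (#𝒢 : ℝ) ≤ (#(wordsBelow d 𝒢) : ℝ) ^ logb d k := by
  have hd₁ : (1 : ℝ) < d := by exact_mod_cast hd
  have hα : 1 ≤ logb d k := by
    rw [← logb_self_eq_one hd₁]
    exact logb_le_logb_of_le hd₁ (by positivity) (by exact_mod_cast hdk)
  induction n with
  | zero =>
    have hbelow : wordsBelow d 𝒢 = 𝒢 := filter_true_of_mem fun g _ t => t.elim0
    rw [hbelow]
    rcases Nat.eq_zero_or_pos #𝒢 with h | h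
    · rw [h, Nat.cast_zero]
      exact rpow_nonneg le_rfl _
    · exact self_le_rpow_of_one_le (by exact_mod_cast h) hα
  | succ n ih =>
    set α := logb d k
    set y : Fin k → ℝ := fun a => #(wordsBelow d (consFiber 𝒢 a))
    set L : Finset (Fin k) := {a | a.val < d}
    have hy : ∀ a, 0 ≤ y a := fun a => Nat.cast_nonneg _
    obtain ⟨b, -, hb⟩ := L.exists_min_image y ⟨⟨0, by omega⟩, by simp [L]; omega⟩
    have high : ∀ a, d ≤ a.val → (#(consFiber 𝒢 a) : ℝ) ≤ y b ^ α := fun a ha =>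
      (ih (h𝒢.consFiber a)).trans <| rpow_le_rpow (hy a)
        (Nat.cast_le.2 (card_le_card (wordsBelow_mono d (h𝒢.consFiber_subset ha b)))) (by linarith)
    have hk : ((#L : ℝ) * y b) ^ α = (#L + #{a : Fin k | ¬ a.val < d}) * y b ^ α := by
      rw [mul_rpow (Nat.cast_nonneg _) (hy b), ← Nat.cast_add, card_filter_add_card_filter_not,
        Fin.card_filter_val_lt, min_eq_right hdk, card_univ, Fintype.card_fin,
        rpow_logb (by positivity) hd₁.ne' (by exact_mod_cast (by omega : 0 < k))]
    have key := (convexOn_rpow hα).sum_add_map_card_mul_le (hy b) L hb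
    calc (#𝒢 : ℝ) = ∑ a, (#(consFiber 𝒢 a) : ℝ) := by
          exact_mod_cast card_eq_sum_card_consFiber 𝒢
      _ = ∑ a ∈ L, (#(consFiber 𝒢 a) : ℝ) + ∑ a : Fin k with ¬ a.val < d, (#(consFiber 𝒢 a) : ℝ) :=
          (sum_filter_add_sum_filter_not _ _ _).symm
      _ ≤ ∑ a ∈ L, y a ^ α + ∑ a : Fin k with ¬ a.val < d, y b ^ α := by
          gcongr with a _ a ha
          · exact ih (h𝒢.consFiber a)
          · exact high a (not_lt.1 (mem_filter.1 ha).2)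
      _ ≤ (∑ a ∈ L, y a) ^ α := by
          rw [sum_const, nsmul_eq_mul]
          linarith
      _ = (#(wordsBelow d 𝒢) : ℝ) ^ α := by
          rw [card_wordsBelow_eq_sum]
          push_cast
          rfl

theorem card_le_of_closed_under_replacement_general (k d n : ℕ) (hd : 2 ≤ d) (hdk : d ≤ k)
    (𝒢 : Finset (Fin n → Fin k))
    (hclosed : ∀ g ∈ 𝒢, ∀ t : Fin n, d ≤ (g t).val → ∀ j : Fin k,
      Function.update g t j ∈ 𝒢) :
    (𝒢 = ∅ ∧ 𝒢.filter (fun g => ∀ t : Fin n, (g t).val < d) = ∅) ∨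
      ((𝒢.card : ℝ) ≤
        (k : ℝ) ^ Real.logb d ((𝒢.filter (fun g => ∀ t : Fin n, (g t).val < d)).card)) := by
  right
  change (#𝒢 : ℝ) ≤ (k : ℝ) ^ logb d (#(wordsBelow d 𝒢) : ℝ)
  have hd₁ : (1 : ℝ) < d := by exact_mod_cast hd
  have hk₁ : (1 : ℝ) < k := by exact_mod_cast (by omega : 1 < k)
  have hmain := card_le_card_wordsBelow_rpow hd hdk hclosed
  rcases Nat.eq_zero_or_pos #(wordsBelow d 𝒢) with h | h
  · rw [h, Nat.cast_zero, zero_rpow (logb_pos hd₁ hk₁).ne'] at hmain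
    exact hmain.trans (rpow_nonneg (Nat.cast_nonneg k) _)
  · rwa [rpow_logb_comm (by positivity) hd₁.ne' (by positivity) (by exact_mod_cast h)]

/-- Lemma 11: letters of `Σ_k` are `0`-indexed, so `σ_i` is `(i − 1 : Fin k)` and
`Σ_d` consists of the letters of value `< d`. If `𝒢 ⊆ Σ_k^n` is closed under replacing any
occurrence of a letter `σ_i` with `i > d` (value `≥ d`) by an arbitrary letter, and
`𝒢' = 𝒢 ∩ Σ_d^n`, then either both are empty or `|𝒢| ≤ k^{log_d |𝒢'|}`. -/
theorem card_le_of_closed_under_replacement (k d n : ℕ) (hd : 2 ≤ d) (hdk : d ≤ k) (hn : 0 < n)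
    (𝒢 : Finset (Fin n → Fin k))
    (hclosed : ∀ g ∈ 𝒢, ∀ t : Fin n, d ≤ (g t).val → ∀ j : Fin k,
      Function.update g t j ∈ 𝒢) :
    (𝒢 = ∅ ∧ 𝒢.filter (fun g => ∀ t : Fin n, (g t).val < d) = ∅) ∨
      ((𝒢.card : ℝ) ≤
        (k : ℝ) ^ Real.logb d ((𝒢.filter (fun g => ∀ t : Fin n, (g t).val < d)).card)) :=
  card_le_of_closed_under_replacement_general k d n hd hdk 𝒢 hclosed
end

section
/- Let Σ = {σ_0, σ_1, σ_2} be an alphabet of three letters, let G_1 be the graph on Σ whose only edge is σ_0σ_1, and let G_2 be the graph on Σ whose only edge is σ_0σ_2. Then for every positive integer n, the vector (2^n, 2) is not feasible at length n: there is no encoding map E from {1,…,2^n} × {1,2} to Σ^n such that user 1 can always recover the first component and user 2 the second. -/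
/-!
User 1 cannot tell `σ₀` from `σ₁`, so he sees a codeword only through the set of its coordinates
equal to `σ₂`; there are just `2^n` such sets. To separate his `2^n` messages he needs all of
them, each attached to a single message of his. In particular one of his messages gets the word
`σ₂ ⋯ σ₂` as codeword whatever the message of user 2, who therefore cannot decode.
-/

open Function Fintype

section FiberSeparating

variable {M A C : Type*} [Fintype A] [Fintype C] {p : M → A} {F : M → C}

theorem bijective_comp_surjInv_of_separating (hp : Surjective p)
    (hF : ∀ x y, p x ≠ p y → F x ≠ F y) (hcard : card C ≤ card A) :
    Bijective (F ∘ surjInv hp) := by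
  have hinj : Injective (F ∘ surjInv hp) := fun a b hab => by
    by_contra hne
    refine hF _ _ ?_ hab
    rwa [surjInv_eq hp, surjInv_eq hp]
  exact (bijective_iff_injective_and_card _).2
    ⟨hinj, (card_le_of_injective _ hinj).antisymm hcard⟩

theorem surjective_of_separating (hp : Surjective p)
    (hF : ∀ x y, p x ≠ p y → F x ≠ F y) (hcard : card C ≤ card A) : Surjective F :=
  (bijective_comp_surjInv_of_separating hp hF hcard).surjective.of_comp

theorem apply_eq_of_separating (hp : Surjective p)
    (hF : ∀ x y, p x ≠ p y → F x ≠ F y) (hcard : card C ≤ card A) {x y : M}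
    (hxy : p x = p y) : F x = F y := by
  have hsection : ∀ z, F z = F (surjInv hp (p z)) := fun z => by
    obtain ⟨a, ha⟩ := (bijective_comp_surjInv_of_separating hp hF hcard).2 (F z)
    have hpa : p z = a := by
      by_contra hne
      exact hF _ _ (by rwa [surjInv_eq hp]) ha.symm
    rw [hpa, ← ha, comp_apply]
  rw [hsection x, hsection y, hxy]

end FiberSeparating

theorem Distinguishable.comp_ne {V β : Type*} {G : SimpleGraph V} {n : ℕ} {x y : Fin n → V}
    {f : V → β} (hf : ∀ u v, f u = f v → u = v ∨ G.Adj u v) (hxy : Distinguishable G x y) :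
    f ∘ x ≠ f ∘ y := fun h => by
  obtain ⟨t, hne, hnadj⟩ := hxy
  exact (hf _ _ (congrFun h t)).elim hne hnadj

theorem not_feasibleAtLength_pow_two_general (G : Fin 2 → SimpleGraph (Fin 3))
    (hG1 : ∀ a b : Fin 3, (G 0).Adj a b ↔ (a = 0 ∧ b = 1) ∨ (a = 1 ∧ b = 0))
    (n : ℕ) :
    ¬ FeasibleAtLength G ![2 ^ n, 2] n := by
  rintro ⟨E, hE⟩
  have hne : ∀ i, Nonempty (Fin (![2 ^ n, 2] i)) := by
    intro i
    fin_cases i <;> exact Fin.pos_iff_nonempty.mp (by simp)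
  have hp := surjective_eval (β := fun i => Fin (![2 ^ n, 2] i)) 0
  set code : Fin 3 → Bool := fun u => decide (u = 2)
  have hsep : ∀ u v, code u = code v → u = v ∨ (G 0).Adj u v := by
    simp only [code, hG1]
    decide
  have hF : ∀ a b, a 0 ≠ b 0 → code ∘ E a ≠ code ∘ E b :=
    fun a b hab => Distinguishable.comp_ne hsep (hE 0 a b hab)
  have hcard : card (Fin n → Bool) ≤ card (Fin (![2 ^ n, 2] 0)) := by
    rw [card_fun, card_bool, card_fin, card_fin]; rfl
  obtain ⟨a, ha⟩ := surjective_of_separating hp hF hcard fun _ => true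
  have : Nontrivial (Fin (![2 ^ n, 2] 1)) := inferInstanceAs (Nontrivial (Fin 2))
  obtain ⟨j, hj⟩ := exists_ne (a 1)
  set b := update a 1 j
  have hab : a 0 = b 0 := (update_of_ne (by decide) _ _).symm
  have hb : code ∘ E b = fun _ => true := (apply_eq_of_separating hp hF hcard hab).symm.trans ha
  have hEab : E a = E b := funext fun t =>
    (of_decide_eq_true (congrFun ha t)).trans (of_decide_eq_true (congrFun hb t)).symm
  obtain ⟨t, hEt, -⟩ := hE 1 a b (by simpa [b] using hj.symm)
  exact hEt (congrFun hEab t)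

/-- Over a three-letter alphabet `{σ₀, σ₁, σ₂}` where user 1's confusion graph has the single
edge `σ₀σ₁` and user 2's the single edge `σ₀σ₂`, the vector `(2^n, 2)` is not feasible at
length `n` for any positive `n`. -/
theorem not_feasibleAtLength_pow_two (G : Fin 2 → SimpleGraph (Fin 3))
    (hG1 : ∀ a b : Fin 3, (G 0).Adj a b ↔ (a = 0 ∧ b = 1) ∨ (a = 1 ∧ b = 0))
    (hG2 : ∀ a b : Fin 3, (G 1).Adj a b ↔ (a = 0 ∧ b = 2) ∨ (a = 2 ∧ b = 0))
    (n : ℕ) (hn : 0 < n) :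
    ¬ FeasibleAtLength G ![2 ^ n, 2] n :=
  not_feasibleAtLength_pow_two_general G hG1 n
end
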